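/- Let G be a finite group and i a positive integer dividing |G|. Then i divides the sum over all divisors j of i of the number of elements of G of order j. -/

import Mathlib

/-!
The sum counts the solutions of `x ^ i = 1` (Frobenius' theorem), and it suffices to show
`p ^ a ∣ #{x | x ^ (p ^ a * m) = 1}` whenever `p ^ a ∣ |G|` and `p ∤ m`. Splitting each solution
into commuting parts killed by `p ^ a` and by `m` gives
`#{x | x ^ (p ^ a * m) = 1} = ∑_{v ^ m = 1} #{u ∈ C(v) | u ^ p ^ a = 1}`. The noncentral `v` form
conjugacy classes of size `|G : C(v)|`, and by induction on `|G|` applied to `C(v)` each class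
contributes a multiple of `p ^ a`; the central `v` contribute `z * #{u | u ^ p ^ a = 1}` with `z`
prime to `p` by Cauchy's theorem. Taking for `m` the `p'`-part of `|G|` makes the left side `|G|`,
which settles `p ^ a ∣ #{u | u ^ p ^ a = 1}` for the full `p`-part `p ^ a` of `|G|`. Smaller `a`
follow because the number of elements of order `p ^ (a + 1)` is a multiple of
`φ (p ^ (a + 1)) = p ^ a * (p - 1)`.
-/

open Finset Subgroup MulAction

section

variable {G : Type*} [Group G]

theorem card_pow_eq_one_eq_sum_card_orderOf [Finite G] {n : ℕ} (hn : n ≠ 0) :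
    Nat.card {g : G // g ^ n = 1} = ∑ j ∈ n.divisors, Nat.card {g : G // orderOf g = j} := by
  classical
  have := Fintype.ofFinite G
  simp only [Nat.card_eq_fintype_card, Fintype.card_subtype]
  exact (sum_card_orderOf_eq_card_pow_eq_one hn).symm

theorem card_pow_eq_one_eq_card_pow_gcd [Finite G] (n : ℕ) :
    Nat.card {g : G // g ^ n = 1} = Nat.card {g : G // g ^ n.gcd (Nat.card G) = 1} := by
  refine Nat.card_congr (Equiv.subtypeEquivRight fun g => ?_)
  simp only [← orderOf_dvd_iff_pow_eq_one, Nat.dvd_gcd_iff, _root_.orderOf_dvd_natCard, and_true]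

theorem Subgroup.card_pow_eq_one (H : Subgroup G) (n : ℕ) :
    Nat.card {u : H // u ^ n = 1} = Nat.card {u : G // u ∈ H ∧ u ^ n = 1} :=
  Nat.card_congr <| (Equiv.subtypeEquivRight fun u => by simp [Subtype.ext_iff]).trans
    (Equiv.subtypeSubtypeEquivSubtypeInter (· ∈ H) (· ^ n = 1))

theorem totient_dvd_card_orderOf_eq [Finite G] (d : ℕ) :
    d.totient ∣ Nat.card {g : G // orderOf g = d} := by
  classical
  have := Fintype.ofFinite G
  rw [Nat.card_eq_fintype_card, Fintype.card_subtype, card_eq_sum_card_image (zpowers ·)]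
  refine dvd_sum fun C hC => ?_
  obtain ⟨w, hw, rfl⟩ := mem_image.1 hC
  replace hw : orderOf w = d := (mem_filter.1 hw).2
  have hcard : Fintype.card (zpowers w) = d := by
    rw [← Nat.card_eq_fintype_card, Nat.card_zpowers, hw]
  rw [← IsCyclic.card_orderOf_eq_totient (dvd_of_eq hcard.symm)]
  refine (card_bij (fun (x : zpowers w) _ => (x : G)) ?_ (fun _ _ _ _ h => Subtype.ext h) ?_).dvd
  · intro x hx
    replace hx : orderOf x = d := (mem_filter.1 hx).2
    have hle : zpowers (x : G) ≤ zpowers w := zpowers_le.2 x.2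
    refine mem_filter.2 ⟨mem_filter.2 ⟨mem_univ _, by rwa [orderOf_coe]⟩,
      eq_of_le_of_card_ge hle ?_⟩
    rw [Nat.card_zpowers, Nat.card_zpowers, hw, orderOf_coe, hx]
  · intro g hg
    obtain ⟨hg, hgw⟩ := mem_filter.1 hg
    refine ⟨⟨g, hgw ▸ mem_zpowers g⟩, mem_filter.2 ⟨mem_univ _, ?_⟩, rfl⟩
    rw [orderOf_mk]
    exact (mem_filter.1 hg).2

theorem card_pow_mul_eq_one_eq_sum [Fintype G] [DecidableEq G] {r s : ℕ} (hrs : r.Coprime s) :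
    Nat.card {x : G // x ^ (r * s) = 1} =
      ∑ v : G with v ^ s = 1, Nat.card {u : G // Commute u v ∧ u ^ r = 1} := by
  have hone {y : G} {t j : ℕ} (hy : y ^ t = 1) (h : t ∣ j) : y ^ j = 1 := by
    obtain ⟨c, rfl⟩ := h
    rw [pow_mul, hy, one_pow]
  have hself {y : G} {t j : ℕ} (hy : y ^ t = 1) (h : j ≡ 1 [MOD t]) : y ^ j = y :=
    (pow_eq_pow_iff_modEq.2 (h.of_dvd (orderOf_dvd_of_pow_eq_one hy))).trans (pow_one y)
  -- `x ^ k` and `x ^ l` are the `s`-part and the `r`-part of `x`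
  obtain ⟨k, hkr, hks⟩ := Nat.chineseRemainder hrs 0 1
  obtain ⟨l, hlr, hls⟩ := Nat.chineseRemainder hrs 1 0
  have hrk : r ∣ k := Nat.modEq_zero_iff_dvd.1 hkr
  have hsl : s ∣ l := Nat.modEq_zero_iff_dvd.1 hls
  have hlk : l + k ≡ 1 [MOD r * s] := (Nat.modEq_and_modEq_iff_modEq_mul hrs).1
    ⟨by simpa using hlr.add hkr, by simpa using hls.add hks⟩
  let e : {x : G // x ^ (r * s) = 1} ≃
      Σ v : {v : G // v ^ s = 1}, {u : G // Commute u v ∧ u ^ r = 1} :=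
    { toFun := fun x =>
        ⟨⟨x ^ k, by rw [← pow_mul]; exact hone x.2 (mul_dvd_mul_right hrk s)⟩,
          x ^ l, (Commute.refl _).pow_pow l k, by
            rw [← pow_mul]
            exact hone x.2 ((mul_dvd_mul_left r hsl).trans (mul_comm r l).dvd)⟩
      invFun := fun q => ⟨q.2 * q.1, by
        rw [q.2.2.1.mul_pow, hone q.2.2.2 (dvd_mul_right r s), hone q.1.2 (dvd_mul_left s r),
          one_mul]⟩
      left_inv := fun x => Subtype.ext <| by
        simp only [← pow_add]
        exact hself x.2 hlk
      right_inv := fun ⟨v, u, hu⟩ => Sigma.subtype_ext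
        (Subtype.ext <| by simp only [hu.1.mul_pow, hone hu.2 hrk, hself v.2 hks, one_mul])
        (by simp only [hu.1.mul_pow, hone v.2 hsl, hself hu.2 hlr, mul_one]) }
  rw [Nat.card_congr e, Nat.card_sigma]
  exact (sum_subtype _ (fun v => by simp) fun v =>
    Nat.card {u : G // Commute u v ∧ u ^ r = 1}).symm

theorem MulAction.dvd_sum_of_dvd_card_orbit_mul {H α : Type*} [Group H] [MulAction H α]
    [Fintype α] {d : ℕ} (f : α → ℕ) (hf : ∀ (h : H) x, f (h • x) = f x)
    (hd : ∀ x, d ∣ Nat.card (orbit H x) * f x) : d ∣ ∑ x, f x := by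
  classical
  rw [← (selfEquivSigmaOrbits H α).symm.sum_comp, Fintype.sum_sigma]
  refine dvd_sum fun ω _ => ?_
  have hconst (y : orbit H ω.out) : f y = f ω.out := by
    obtain ⟨h, hh⟩ := y.2
    rw [← hh, hf]
  change d ∣ ∑ y : orbit H ω.out, f y
  rw [sum_congr rfl fun y _ => hconst y, sum_const, card_univ, ← Nat.card_eq_fintype_card,
    smul_eq_mul]
  exact hd _

theorem card_commute_pow_eq_one_conj (g v : G) (r : ℕ) :
    Nat.card {u : G // Commute u (g * v * g⁻¹) ∧ u ^ r = 1} =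
      Nat.card {u : G // Commute u v ∧ u ^ r = 1} := by
  refine (Nat.card_congr (Equiv.subtypeEquiv (MulAut.conj g).toEquiv fun u => ?_)).symm
  simp [Commute.conj_iff, conj_pow]

theorem ConjAct.card_orbit_eq_index_centralizer (v : G) :
    Nat.card (orbit (ConjAct G) v) = (centralizer {v}).index := by
  rw [Nat.card_coe_set_eq, ← index_stabilizer, centralizer_eq_comap_stabilizer]
  exact (index_comap_of_surjective _ ConjAct.toConjAct.surjective).symm

theorem ConjAct.smul_mem_center_iff (g : ConjAct G) (x : G) :
    g • x ∈ center G ↔ x ∈ center G := by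
  rw [ConjAct.smul_def]
  refine ⟨fun h => ?_, fun h => Normal.conj_mem inferInstance x h _⟩
  simpa [mul_assoc] using Normal.conj_mem inferInstance _ h (ofConjAct g)⁻¹

theorem card_centralizer_lt [Finite G] {v : G} (hv : v ∉ center G) :
    Nat.card (centralizer {v}) < Nat.card G :=
  (card_le_card_group _).lt_of_ne fun h => hv <| Set.singleton_subset_iff.1 <|
    centralizer_eq_top_iff_subset.1 <| (card_eq_iff_eq_top _).1 h

theorem card_centralizer_pow_eq_one (v : G) (r : ℕ) :
    Nat.card {u : centralizer {v} // u ^ r = 1} = Nat.card {u : G // Commute u v ∧ u ^ r = 1} :=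
  (card_pow_eq_one _ r).trans <|
    Nat.card_congr <| Equiv.subtypeEquivRight fun _ => and_congr_left' mem_centralizer_singleton_iff

theorem card_pow_mul_eq_one_modEq [Finite G] {r s d : ℕ} (hrs : r.Coprime s)
    (hd : ∀ v : G, v ∉ center G → v ^ s = 1 →
      d ∣ (centralizer {v}).index * Nat.card {u : centralizer {v} // u ^ r = 1}) :
    Nat.card {x : G // x ^ (r * s) = 1} ≡
      Nat.card {v : G // v ∈ center G ∧ v ^ s = 1} * Nat.card {u : G // u ^ r = 1} [MOD d] := by
  classical
  have := Fintype.ofFinite G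
  set c : G → ℕ := fun v => Nat.card {u : G // Commute u v ∧ u ^ r = 1}
  have hc_center {v : G} (hv : v ∈ center G) : c v = Nat.card {u : G // u ^ r = 1} :=
    Nat.card_congr <| Equiv.subtypeEquivRight fun u =>
      and_iff_right (mem_center_iff.1 hv u)
  rw [card_pow_mul_eq_one_eq_sum hrs, ← sum_filter_add_sum_filter_not _ (· ∈ center G),
    sum_congr rfl fun v hv => hc_center (mem_filter.1 hv).2, sum_const, smul_eq_mul]
  have hcard : #({v ∈ {v | v ^ s = 1} | v ∈ center G}) =
      Nat.card {v : G // v ∈ center G ∧ v ^ s = 1} := by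
    rw [Nat.card_eq_fintype_card, Fintype.card_subtype, filter_filter]
    simp only [and_comm]
  have hnoncentral : d ∣ ∑ v ∈ {v | v ^ s = 1} with v ∉ center G, c v := by
    rw [filter_filter, sum_filter]
    refine MulAction.dvd_sum_of_dvd_card_orbit_mul (H := ConjAct G) _ (fun g x => ?_) fun x => ?_
    · simp only [ConjAct.smul_mem_center_iff]
      simp only [ConjAct.smul_def, conj_pow, conj_eq_one_iff, c, card_commute_pow_eq_one_conj]
    · split_ifs with hx
      · rw [ConjAct.card_orbit_eq_index_centralizer]
        simpa only [card_centralizer_pow_eq_one] using hd x hx.2 hx.1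
      · rw [mul_zero]
        exact dvd_zero d
  rw [hcard]
  exact (Nat.ModEq.add_left _ (Nat.modEq_zero_iff_dvd.2 hnoncentral)).trans (by rw [add_zero])

theorem not_dvd_card_center_pow_eq_one [Finite G] {p m : ℕ} (hp : p.Prime) (hm : ¬ p ∣ m) :
    ¬ p ∣ Nat.card {v : G // v ∈ center G ∧ v ^ m = 1} := by
  let K : Subgroup G :=
    { carrier := {v | v ∈ center G ∧ v ^ m = 1}
      mul_mem' := fun {a b} ha hb => ⟨mul_mem ha.1 hb.1, by
        rw [Commute.mul_pow (mem_center_iff.1 ha.1 b).symm, ha.2, hb.2, one_mul]⟩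
      one_mem' := ⟨one_mem _, one_pow m⟩
      inv_mem' := fun {a} ha => ⟨inv_mem ha.1, by rw [inv_pow, ha.2, inv_one]⟩ }
  have := Fact.mk hp
  intro hpK
  obtain ⟨x, hx⟩ := exists_prime_orderOf_dvd_card' (G := K) p hpK
  exact hm (hx ▸ orderOf_coe x ▸ orderOf_dvd_of_pow_eq_one x.2.2)

theorem pow_dvd_index_mul_card_pow_eq_one [Finite G] {p : ℕ} (hp : p.Prime) (H : Subgroup G)
    {a : ℕ} (ha : p ^ a ∣ Nat.card G)
    (hH : ∀ b, p ^ b ∣ Nat.card H → p ^ b ∣ Nat.card {u : H // u ^ p ^ b = 1}) :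
    p ^ a ∣ H.index * Nat.card {u : H // u ^ p ^ a = 1} := by
  obtain ⟨b, -, hb⟩ := (Nat.dvd_prime_pow hp).1 (Nat.gcd_dvd_left (p ^ a) (Nat.card H))
  calc p ^ a ∣ p ^ b * H.index := by
        rw [← hb, ← Nat.gcd_mul_right, card_mul_index]
        exact Nat.dvd_gcd (dvd_mul_right _ _) ha
    _ ∣ H.index * Nat.card {u : H // u ^ p ^ a = 1} := by
        rw [mul_comm, card_pow_eq_one_eq_card_pow_gcd, hb]
        exact mul_dvd_mul_left _ (hH b (hb ▸ Nat.gcd_dvd_right _ _))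

theorem pow_dvd_card_pow_eq_one_of_succ [Finite G] {p a : ℕ} (hp : p.Prime)
    (h : p ^ (a + 1) ∣ Nat.card {g : G // g ^ p ^ (a + 1) = 1}) :
    p ^ a ∣ Nat.card {g : G // g ^ p ^ a = 1} := by
  have hsplit : Nat.card {g : G // g ^ p ^ (a + 1) = 1} =
      Nat.card {g : G // g ^ p ^ a = 1} + Nat.card {g : G // orderOf g = p ^ (a + 1)} := by
    simp only [card_pow_eq_one_eq_sum_card_orderOf (pow_ne_zero _ hp.ne_zero),
      Nat.divisors_prime_pow hp, sum_map, sum_range_succ (n := a + 1)]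
    rfl
  have htot : p ^ a ∣ Nat.card {g : G // orderOf g = p ^ (a + 1)} :=
    (Nat.totient_prime_pow_succ hp a ▸ dvd_mul_right _ _).trans (totient_dvd_card_orderOf_eq _)
  rw [hsplit] at h
  exact (Nat.dvd_add_left htot).1 ((pow_dvd_pow p a.le_succ).trans h)

theorem pow_dvd_card_pow_eq_one_of_le [Finite G] {p a b : ℕ} (hp : p.Prime) (hab : a ≤ b)
    (h : p ^ b ∣ Nat.card {g : G // g ^ p ^ b = 1}) :
    p ^ a ∣ Nat.card {g : G // g ^ p ^ a = 1} := by
  induction b, hab using Nat.le_induction with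
  | base => exact h
  | succ b _ ih => exact ih (pow_dvd_card_pow_eq_one_of_succ hp h)

theorem card_pow_card_eq_one [Finite G] : Nat.card {g : G // g ^ Nat.card G = 1} = Nat.card G :=
  Nat.card_congr (Equiv.subtypeUnivEquiv fun _ => pow_card_eq_one')

theorem prime_pow_dvd_card_pow_eq_one [Finite G] {p a : ℕ} (hp : p.Prime)
    (ha : p ^ a ∣ Nat.card G) : p ^ a ∣ Nat.card {g : G // g ^ p ^ a = 1} := by
  induction hN : Nat.card G using Nat.strong_induction_on generalizing G a with
  | _ N ih =>
  subst hN
  have hN0 : Nat.card G ≠ 0 := Nat.card_pos.ne'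
  set v := (Nat.card G).factorization p
  set m := ordCompl[p] (Nat.card G)
  have hcong := card_pow_mul_eq_one_modEq (d := p ^ v)
    ((Nat.coprime_ordCompl hp hN0).pow_left v) fun x hx _ =>
      pow_dvd_index_mul_card_pow_eq_one hp _ (Nat.ordProj_dvd _ _) fun b hb =>
        ih _ (card_centralizer_lt hx) hb rfl
  rw [Nat.ordProj_mul_ordCompl_eq_self, card_pow_card_eq_one] at hcong
  have hz : (p ^ v).Coprime (Nat.card {x : G // x ∈ center G ∧ x ^ m = 1}) :=
    ((hp.coprime_iff_not_dvd.2 (not_dvd_card_center_pow_eq_one hp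
      (Nat.not_dvd_ordCompl hp hN0))).pow_left v)
  have htop : p ^ v ∣ Nat.card {g : G // g ^ p ^ v = 1} :=
    hz.dvd_of_dvd_mul_left <| (Nat.modEq_zero_iff_dvd.1 <|
      hcong.symm.trans (Nat.modEq_zero_iff_dvd.2 (Nat.ordProj_dvd _ _)))
  exact pow_dvd_card_pow_eq_one_of_le hp ((hp.pow_dvd_iff_le_factorization hN0).1 ha) htop

theorem dvd_card_pow_eq_one [Finite G] {n : ℕ} (hn : n ∣ Nat.card G) :
    n ∣ Nat.card {g : G // g ^ n = 1} := by
  have hn0 : n ≠ 0 := ne_zero_of_dvd_ne_zero Nat.card_pos.ne' hn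
  refine (Nat.dvd_iff_prime_pow_dvd_dvd _ _).2 fun p k hp hpk => ?_
  set a := n.factorization p
  have hpa : p ^ a ∣ Nat.card G := (Nat.ordProj_dvd n p).trans hn
  have hcong := card_pow_mul_eq_one_modEq (d := p ^ a)
    ((Nat.coprime_ordCompl hp hn0).pow_left a) fun x _ _ =>
      pow_dvd_index_mul_card_pow_eq_one hp _ hpa fun b hb => prime_pow_dvd_card_pow_eq_one hp hb
  rw [Nat.ordProj_mul_ordCompl_eq_self] at hcong
  have hpa' : p ^ a ∣ Nat.card {g : G // g ^ n = 1} :=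
    Nat.modEq_zero_iff_dvd.1 <| hcong.trans <| Nat.modEq_zero_iff_dvd.2 <|
      dvd_mul_of_dvd_right (prime_pow_dvd_card_pow_eq_one hp hpa) _
  exact ((hp.pow_dvd_iff_dvd_ordProj hn0).1 hpk).trans hpa'

end

theorem dvd_sum_card_orderOf_general (G : Type*) [Group G] [Fintype G] (i : ℕ)
    (hdvd : i ∣ Fintype.card G) :
    i ∣ ∑ j ∈ Nat.divisors i, Nat.card {g : G // orderOf g = j} := by
  rw [← Nat.card_eq_fintype_card] at hdvd
  rw [← card_pow_eq_one_eq_sum_card_orderOf (ne_zero_of_dvd_ne_zero Nat.card_pos.ne' hdvd)]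
  exact dvd_card_pow_eq_one hdvd

/-- If `i` divides the order of a finite group `G`, then `i` divides the sum over
all divisors `j` of `i` of the number of elements of order exactly `j`. -/
theorem dvd_sum_card_orderOf (G : Type*) [Group G] [Fintype G] (i : ℕ) (hi : 0 < i)
    (hdvd : i ∣ Fintype.card G) :
    i ∣ ∑ j ∈ Nat.divisors i, Nat.card {g : G // orderOf g = j} :=
  dvd_sum_card_orderOf_general G i hdvd
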